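/- arXiv:1107.3133 — 4 statements merged into one kernel-verified Lean document; each statement's English description precedes it below -/
import Mathlib

section
/- Let H be a Hilbert space and let v1, v2, v3 ∈ H be linearly independent. For any g, h ∈ H with g ≠ h, there exists i ∈ {1,2,3} such that v_i − g and v_i − h are linearly independent. -/
open Submodule

/- A dependence `s • (v - g) + t • (v - h) = 0` has `s + t ≠ 0`, since otherwise it reads
`s • (h - g) = 0`; dividing by `s + t` writes `v` as an affine combination of `g` and `h`. -/
theorem mem_span_pair_of_not_linearIndependent_sub {K V : Type*} [Field K] [AddCommGroup V]
    [Module K V] {v g h : V} (hgh : g ≠ h) (hv : ¬LinearIndependent K ![v - g, v - h]) :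
    v ∈ span K {g, h} := by
  rw [LinearIndependent.pair_iff] at hv
  push Not at hv
  obtain ⟨s, t, hst, hne⟩ := hv
  have hsum : s + t ≠ 0 := by
    intro hsum
    obtain rfl : t = -s := eq_neg_of_add_eq_zero_right hsum
    have hs : s • (h - g) = 0 := by rw [← hst]; module
    rcases smul_eq_zero.mp hs with hs | hhg
    · exact hne hs (by simp [hs])
    · exact hgh (sub_eq_zero.mp hhg).symm
  have hcomb : (s + t) • v = s • g + t • h := by
    rw [← sub_eq_zero, ← hst]; module
  refine mem_span_pair.mpr ⟨(s + t)⁻¹ * s, (s + t)⁻¹ * t, ?_⟩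
  rw [mul_smul, mul_smul, ← smul_add, ← hcomb, inv_smul_smul₀ hsum]

theorem card_le_two_of_linearIndependent_of_mem_span_pair {R M ι : Type*} [Ring R]
    [StrongRankCondition R] [AddCommGroup M] [Module R M] [Fintype ι] {v : ι → M}
    (hv : LinearIndependent R v) {g h : M} (hspan : ∀ i, v i ∈ span R {g, h}) :
    Fintype.card ι ≤ 2 := by
  classical
  calc Fintype.card ι ≤ Fintype.card ({g, h} : Set M) :=
        linearIndependent_le_span_aux' v hv _ (Set.range_subset_iff.mpr hspan)
    _ ≤ 2 := by rw [← Set.toFinset_card]; simpa using Finset.card_le_two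

theorem exists_linearIndependent_shift_general
    {H : Type*} [NormedAddCommGroup H] [InnerProductSpace ℝ H]
    (v : Fin 3 → H) (hv : LinearIndependent ℝ v)
    (g h : H) (hgh : g ≠ h) :
    ∃ i : Fin 3, LinearIndependent ℝ ![v i - g, v i - h] := by
  by_contra! hdep
  have hspan : ∀ i, v i ∈ span ℝ {g, h} := fun i =>
    mem_span_pair_of_not_linearIndependent_sub hgh (hdep i)
  simpa using card_le_two_of_linearIndependent_of_mem_span_pair hv hspan

theorem exists_linearIndependent_shift
    {H : Type*} [NormedAddCommGroup H] [InnerProductSpace ℝ H] [CompleteSpace H]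
    (v : Fin 3 → H) (hv : LinearIndependent ℝ v)
    (g h : H) (hgh : g ≠ h) :
    ∃ i : Fin 3, LinearIndependent ℝ ![v i - g, v i - h] :=
  exists_linearIndependent_shift_general v hv g h hgh
end

section
/- Let ρ : [0,∞) → ℝ be strictly convex and non-decreasing, let H be a Hilbert space, and let v1, ..., vn ∈ H with n ≥ 1. Then J(g) = (1/n) Σ_{i=1}^n ρ(‖v_i − g‖) is strictly convex on H. -/
/-!
Each summand `g ↦ ρ ‖v i - g‖` is already strictly convex. Along a segment from `g` to `h`,
the triangle inequality and the convexity and monotonicity of `ρ` give the convexity inequality;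
it is strict by strict convexity of `ρ` when `‖v i - g‖ ≠ ‖v i - h‖`, and otherwise because in a
Hilbert space (indeed in any strictly convex space) the interior points of a chord of a sphere lie
strictly inside the ball, while a strictly convex monotone `ρ` is strictly monotone.
-/

open Set

section Scalar

variable {𝕜 β : Type*} [Field 𝕜] [LinearOrder 𝕜] [IsStrictOrderedRing 𝕜]
  [AddCommGroup β] [PartialOrder β] [Module 𝕜 β] {s : Set 𝕜} {f : 𝕜 → β}

theorem StrictConvexOn.strictMonoOn_of_monotoneOn (hf : StrictConvexOn 𝕜 s f)
    (hf' : MonotoneOn f s) : StrictMonoOn f s := by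
  intro x hx y hy hxy
  refine (hf' hx hy hxy.le).lt_of_ne fun heq => ?_
  have hmid : (1 / 2 : 𝕜) • x + (1 / 2 : 𝕜) • y ∈ s :=
    hf.1 hx hy (by positivity) (by positivity) (add_halves (1 : 𝕜))
  have hlt := hf.2 hx hy hxy.ne (by positivity) (by positivity) (add_halves (1 : 𝕜))
  rw [← heq, Convex.combo_self (add_halves (1 : 𝕜))] at hlt
  refine (hf' hx hmid ?_).not_gt hlt
  simp only [smul_eq_mul]
  linarith

end Scalar

section Operations

variable {𝕜 E β ι : Type*} [CommSemiring 𝕜] [PartialOrder 𝕜] [AddCommMonoid E] [SMul 𝕜 E]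
  [AddCommMonoid β] [PartialOrder β] [Module 𝕜 β] {s : Set E}

theorem StrictConvexOn.smul [PosSMulStrictMono 𝕜 β] {c : 𝕜} (hc : 0 < c) {f : E → β}
    (hf : StrictConvexOn 𝕜 s f) : StrictConvexOn 𝕜 s fun x => c • f x :=
  ⟨hf.1, fun x hx y hy hxy a b ha hb hab =>
    calc c • f (a • x + b • y) < c • (a • f x + b • f y) :=
          smul_lt_smul_of_pos_left (hf.2 hx hy hxy ha hb hab) hc
      _ = a • c • f x + b • c • f y := by rw [smul_add, smul_comm c, smul_comm c]⟩

theorem StrictConvexOn.sum [IsOrderedCancelAddMonoid β] {t : Finset ι} (ht : t.Nonempty)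
    {f : ι → E → β} (hf : ∀ i ∈ t, StrictConvexOn 𝕜 s (f i)) :
    StrictConvexOn 𝕜 s fun x => ∑ i ∈ t, f i x := by
  obtain ⟨i₀, hi₀⟩ := ht
  refine ⟨(hf i₀ hi₀).1, fun x hx y hy hxy a b ha hb hab => ?_⟩
  calc ∑ i ∈ t, f i (a • x + b • y) < ∑ i ∈ t, (a • f i x + b • f i y) :=
        Finset.sum_lt_sum_of_nonempty ⟨i₀, hi₀⟩ fun i hi => (hf i hi).2 hx hy hxy ha hb hab
    _ = a • ∑ i ∈ t, f i x + b • ∑ i ∈ t, f i y := by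
        rw [Finset.sum_add_distrib, Finset.smul_sum, Finset.smul_sum]

end Operations

theorem StrictConvexOn.comp_norm {E : Type*} [NormedAddCommGroup E] [NormedSpace ℝ E]
    [StrictConvexSpace ℝ E] {ρ : ℝ → ℝ} (hconv : StrictConvexOn ℝ (Ici 0) ρ)
    (hmono : MonotoneOn ρ (Ici 0)) : StrictConvexOn ℝ univ fun x : E => ρ ‖x‖ := by
  refine ⟨convex_univ, fun x _ y _ hxy a b ha hb hab => ?_⟩
  rcases eq_or_ne ‖x‖ ‖y‖ with heq | hne
  · calc ρ ‖a • x + b • y‖ < ρ ‖x‖ :=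
          hconv.strictMonoOn_of_monotoneOn hmono (norm_nonneg _) (norm_nonneg _)
            (norm_combo_lt_of_ne le_rfl heq.ge hxy ha hb hab)
      _ = a • ρ ‖x‖ + b • ρ ‖y‖ := by rw [← heq, Convex.combo_self hab]
  · have hcombo : ‖a • x + b • y‖ ≤ a • ‖x‖ + b • ‖y‖ :=
      (convexOn_norm convex_univ).2 (mem_univ x) (mem_univ y) ha.le hb.le hab
    calc ρ ‖a • x + b • y‖ ≤ ρ (a • ‖x‖ + b • ‖y‖) :=
          hmono (norm_nonneg _)
            (convex_Ici 0 (norm_nonneg x) (norm_nonneg y) ha.le hb.le hab) hcombo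
      _ < a • ρ ‖x‖ + b • ρ ‖y‖ := hconv.2 (norm_nonneg x) (norm_nonneg y) hne ha hb hab

theorem StrictConvexOn.comp_norm_sub {E : Type*} [NormedAddCommGroup E] [NormedSpace ℝ E]
    [StrictConvexSpace ℝ E] {ρ : ℝ → ℝ} (hconv : StrictConvexOn ℝ (Ici 0) ρ)
    (hmono : MonotoneOn ρ (Ici 0)) (v : E) : StrictConvexOn ℝ univ fun g : E => ρ ‖v - g‖ := by
  refine ((hconv.comp_norm hmono).translate_right (-v)).congr fun g _ => ?_
  simp only [Function.comp_apply, neg_add_eq_sub, norm_sub_rev]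

theorem robust_objective_strictConvex_of_strictConvex_general
    {H : Type*} [NormedAddCommGroup H] [InnerProductSpace ℝ H]
    {n : ℕ} (hn : 1 ≤ n) (v : Fin n → H) (ρ : ℝ → ℝ)
    (hconv : StrictConvexOn ℝ (Set.Ici 0) ρ) (hmono : MonotoneOn ρ (Set.Ici 0)) :
    StrictConvexOn ℝ Set.univ (fun g : H => (1 / (n : ℝ)) * ∑ i, ρ ‖v i - g‖) := by
  have hne : (Finset.univ : Finset (Fin n)).Nonempty :=
    Finset.univ_nonempty_iff.2 (Fin.pos_iff_nonempty.1 hn)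
  have hpos : (0 : ℝ) < 1 / n := by positivity
  exact (StrictConvexOn.sum hne fun i _ => hconv.comp_norm_sub hmono (v i)).smul hpos

theorem robust_objective_strictConvex_of_strictConvex
    {H : Type*} [NormedAddCommGroup H] [InnerProductSpace ℝ H] [CompleteSpace H]
    {n : ℕ} (hn : 1 ≤ n) (v : Fin n → H) (ρ : ℝ → ℝ)
    (hconv : StrictConvexOn ℝ (Set.Ici 0) ρ) (hmono : MonotoneOn ρ (Set.Ici 0)) :
    StrictConvexOn ℝ Set.univ (fun g : H => (1 / (n : ℝ)) * ∑ i, ρ ‖v i - g‖) :=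
  robust_objective_strictConvex_of_strictConvex_general hn v ρ hconv hmono
end

section
/- Let ρ : [0,∞) → ℝ be convex and strictly increasing, let H be a Hilbert space, and suppose v1, v2, v3 ∈ H are linearly independent. Then J(g) = (1/3) Σ_{i=1}^3 ρ(‖v_i − g‖) is strictly convex on H. -/
/-!
If `x - g` and `x - h` lie on a common ray and `g ≠ h`, then `x` lies on the line through `g` and
`h`, hence in `span {g, h}`. Three linearly independent vectors cannot all lie in a plane, so for
`g ≠ h` some `vᵢ` sees `g` and `h` in different directions. For that index the triangle inequality
`‖a (vᵢ - g) + b (vᵢ - h)‖ ≤ a ‖vᵢ - g‖ + b ‖vᵢ - h‖` is strict in a strictly convex space (such as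
a Hilbert space), and strict monotonicity of `ρ` carries the strict inequality through `ρ`; the
other terms of the sum satisfy the non-strict inequality by convexity and monotonicity of `ρ`.
-/

open Set Submodule Module

theorem StrictConvexOn.const_mul {E : Type*} [AddCommGroup E] [Module ℝ E] {s : Set E}
    {f : E → ℝ} {c : ℝ} (hf : StrictConvexOn ℝ s f) (hc : 0 < c) :
    StrictConvexOn ℝ s fun x => c * f x :=
  ⟨hf.1, fun x hx y hy hxy a b ha hb hab => by
    have := mul_lt_mul_of_pos_left (hf.2 hx hy hxy ha hb hab) hc
    simp only [smul_eq_mul] at this ⊢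
    linarith⟩

section SameRay

variable {R M : Type*} [Field R] [LinearOrder R] [IsStrictOrderedRing R] [AddCommGroup M]
  [Module R M]

theorem mem_span_pair_of_sameRay_sub {x g h : M} (hgh : g ≠ h)
    (hray : SameRay R (x - g) (x - h)) : x ∈ span R {g, h} := by
  obtain ⟨a, b, -, -, hab, hxg, hxh⟩ := hray.exists_eq_smul_add
  have hcoef : (1 - 2 * a : R) ≠ 0 := by
    intro hhalf
    have hb : b = a := by linarith
    apply hgh
    rw [hb, ← hxg] at hxh
    simpa using hxh.symm
  have hx : (1 - 2 * a) • x = (1 - a) • g - a • h := by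
    linear_combination (norm := module) hxg
  rw [← inv_smul_smul₀ hcoef x, hx]
  exact smul_mem _ _ (sub_mem (smul_mem _ _ (subset_span (by simp)))
    (smul_mem _ _ (subset_span (by simp))))

theorem LinearIndependent.exists_not_sameRay_sub {ι : Type*} [Fintype ι] {v : ι → M}
    (hv : LinearIndependent R v) (hcard : 2 < Fintype.card ι) {g h : M} (hgh : g ≠ h) :
    ∃ i, ¬SameRay R (v i - g) (v i - h) := by
  classical
  by_contra! hall
  have hspan : span R (range v) ≤ span R {g, h} :=
    span_le.2 <| by
      rintro _ ⟨i, rfl⟩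
      exact mem_span_pair_of_sameRay_sub hgh (hall i)
  have hpair : finrank R (span R ({g, h} : Set M)) ≤ 2 := by
    have := (finrank_span_finset_le_card (R := R) ({g, h} : Finset M)).trans Finset.card_le_two
    rwa [Finset.coe_pair] at this
  have : Module.Finite R (span R {g, h}) := .span_of_finite R (toFinite _)
  have hcard_le := finrank_span_eq_card hv ▸ Submodule.finrank_mono hspan
  omega

end SameRay

section NormComp

variable {E : Type*} [NormedAddCommGroup E] [NormedSpace ℝ E] {ρ : ℝ → ℝ} {a b : ℝ}

theorem ConvexOn.comp_norm_smul_add_le (hconv : ConvexOn ℝ (Ici 0) ρ)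
    (hmono : MonotoneOn ρ (Ici 0)) (x y : E) (ha : 0 ≤ a) (hb : 0 ≤ b) (hab : a + b = 1) :
    ρ ‖a • x + b • y‖ ≤ a * ρ ‖x‖ + b * ρ ‖y‖ := by
  have hnorm : ‖a • x + b • y‖ ≤ a * ‖x‖ + b * ‖y‖ := by
    simpa [norm_smul_of_nonneg ha, norm_smul_of_nonneg hb] using norm_add_le (a • x) (b • y)
  calc ρ ‖a • x + b • y‖ ≤ ρ (a * ‖x‖ + b * ‖y‖) :=
        hmono (norm_nonneg _) (le_trans (norm_nonneg _) hnorm) hnorm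
    _ ≤ a * ρ ‖x‖ + b * ρ ‖y‖ := hconv.2 (norm_nonneg x) (norm_nonneg y) ha hb hab

theorem ConvexOn.comp_norm_smul_add_lt_of_not_sameRay [StrictConvexSpace ℝ E]
    (hconv : ConvexOn ℝ (Ici 0) ρ) (hmono : StrictMonoOn ρ (Ici 0)) {x y : E}
    (hxy : ¬SameRay ℝ x y) (ha : 0 < a) (hb : 0 < b) (hab : a + b = 1) :
    ρ ‖a • x + b • y‖ < a * ρ ‖x‖ + b * ρ ‖y‖ := by
  have hray : ¬SameRay ℝ (a • x) (b • y) := fun hray => hxy <| by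
    simpa [inv_smul_smul₀ ha.ne', inv_smul_smul₀ hb.ne'] using
      (hray.pos_smul_left (inv_pos.2 ha)).pos_smul_right (inv_pos.2 hb)
  have hnorm : ‖a • x + b • y‖ < a * ‖x‖ + b * ‖y‖ := by
    simpa [norm_smul_of_nonneg ha.le, norm_smul_of_nonneg hb.le] using
      norm_add_lt_of_not_sameRay hray
  calc ρ ‖a • x + b • y‖ < ρ (a * ‖x‖ + b * ‖y‖) :=
        hmono (norm_nonneg _) (le_trans (norm_nonneg _) hnorm.le) hnorm
    _ ≤ a * ρ ‖x‖ + b * ρ ‖y‖ := hconv.2 (norm_nonneg x) (norm_nonneg y) ha.le hb.le hab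

theorem strictConvexOn_sum_comp_norm_sub [StrictConvexSpace ℝ E] {ι : Type*} [Fintype ι]
    (v : ι → E) (hconv : ConvexOn ℝ (Ici 0) ρ) (hmono : StrictMonoOn ρ (Ici 0))
    (hv : ∀ g h, g ≠ h → ∃ i, ¬SameRay ℝ (v i - g) (v i - h)) :
    StrictConvexOn ℝ univ fun g => ∑ i, ρ ‖v i - g‖ := by
  refine ⟨convex_univ, fun g _ h _ hgh a b ha hb hab => ?_⟩
  have hsplit : ∀ i, v i - (a • g + b • h) = a • (v i - g) + b • (v i - h) := fun i => by
    match_scalars <;> linarith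
  obtain ⟨i₀, hi₀⟩ := hv g h hgh
  simp only [smul_eq_mul, Finset.mul_sum, ← Finset.sum_add_distrib, hsplit]
  exact Finset.sum_lt_sum
    (fun i _ => hconv.comp_norm_smul_add_le hmono.monotoneOn _ _ ha.le hb.le hab)
    ⟨i₀, Finset.mem_univ _, hconv.comp_norm_smul_add_lt_of_not_sameRay hmono hi₀ ha hb hab⟩

end NormComp

theorem robust_objective_strictConvex_of_linearIndependent_general
    {H : Type*} [NormedAddCommGroup H] [InnerProductSpace ℝ H]
    (v : Fin 3 → H) (hv : LinearIndependent ℝ v) (ρ : ℝ → ℝ)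
    (hconv : ConvexOn ℝ (Set.Ici 0) ρ) (hmono : StrictMonoOn ρ (Set.Ici 0)) :
    StrictConvexOn ℝ Set.univ (fun g : H => (1 / 3 : ℝ) * ∑ i, ρ ‖v i - g‖) :=
  (strictConvexOn_sum_comp_norm_sub v hconv hmono fun _ _ hgh =>
    hv.exists_not_sameRay_sub (by simp) hgh).const_mul (by norm_num)

theorem robust_objective_strictConvex_of_linearIndependent
    {H : Type*} [NormedAddCommGroup H] [InnerProductSpace ℝ H] [CompleteSpace H]
    (v : Fin 3 → H) (hv : LinearIndependent ℝ v) (ρ : ℝ → ℝ)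
    (hconv : ConvexOn ℝ (Set.Ici 0) ρ) (hmono : StrictMonoOn ρ (Set.Ici 0)) :
    StrictConvexOn ℝ Set.univ (fun g : H => (1 / 3 : ℝ) * ∑ i, ρ ‖v i - g‖) :=
  robust_objective_strictConvex_of_linearIndependent_general v hv ρ hconv hmono
end

section
/- Let H be a Hilbert space, x ∈ H, and ρ : [0,∞) → ℝ be differentiable on (0,∞) with ψ = ρ', ρ(0) = 0, ρ(x)/x → 0 as x → 0, and with φ(t) = ψ(t)/t having a finite limit φ(0) at 0. Then for every g, h ∈ H, the function α ↦ ρ(‖x − (g + αh)‖) is differentiable at every α with derivative −φ(‖x − (g+αh)‖)·⟨x − (g+αh), h⟩. -/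
/-!
Write `u(α) = x - (g + α • h)`, an affine curve with velocity `-h`, so by the chain rule it is enough
to show that `v ↦ ρ ‖v‖` has Fréchet derivative `φ ‖v‖ • ⟪v, ·⟫` at every `v`. Away from `0` the norm
is differentiable with derivative `‖v‖⁻¹ • ⟪v, ·⟫`, and `ρ' = ψ = t φ(t)` there. At `v = 0` the claimed
derivative vanishes, and indeed `ρ ‖v‖ = o(‖v‖)` because `ρ 0 = 0` and `ρ t / t → 0`.
-/

open Filter Asymptotics Topology

section RadialFunction

variable {E : Type*} [NormedAddCommGroup E] {ρ ψ φ : ℝ → ℝ}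

theorem hasFDerivAt_norm_of_ne_zero [InnerProductSpace ℝ E] {v : E} (hv : v ≠ 0) :
    HasFDerivAt (fun w : E => ‖w‖) (‖v‖⁻¹ • innerSL ℝ v) v := by
  have hsq : HasFDerivAt (fun w : E => ‖w‖ ^ 2) (2 • innerSL ℝ v) v :=
    (hasStrictFDerivAt_norm_sq v).hasFDerivAt
  have hroot := hsq.sqrt (pow_ne_zero 2 (norm_ne_zero_iff.mpr hv))
  simp only [Real.sqrt_sq (norm_nonneg _)] at hroot
  convert hroot using 1
  ext w
  simp
  field_simp

theorem isLittleO_comp_norm_of_tendsto_div (hρ0 : ρ 0 = 0)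
    (hρlim : Tendsto (fun t => ρ t / t) (𝓝[>] 0) (𝓝 0)) :
    (fun v : E => ρ ‖v‖) =o[𝓝 0] fun v => v := by
  have hpos : ρ =o[𝓝[>] 0] id :=
    (isLittleO_iff_tendsto' (eventually_of_mem self_mem_nhdsWithin fun t ht h0 =>
      absurd h0 (ne_of_gt ht))).mpr hρlim
  have hnonneg : ρ =o[𝓝[≥] 0] id := by
    rw [← Set.Ioi_insert]
    exact hpos.insert hρ0
  have hnorm : Tendsto (fun v : E => ‖v‖) (𝓝 0) (𝓝[≥] 0) :=
    tendsto_nhdsWithin_iff.mpr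
      ⟨by simpa using (continuous_norm.tendsto (0 : E)), Eventually.of_forall fun v => norm_nonneg v⟩
  exact (hnonneg.comp_tendsto hnorm).trans_isBigO (isBigO_refl _ _).norm_left

theorem hasFDerivAt_comp_norm_zero [NormedSpace ℝ E] (hρ0 : ρ 0 = 0)
    (hρlim : Tendsto (fun t => ρ t / t) (𝓝[>] 0) (𝓝 0)) :
    HasFDerivAt (fun v : E => ρ ‖v‖) (0 : E →L[ℝ] ℝ) 0 := by
  rw [hasFDerivAt_iff_isLittleO_nhds_zero]
  simpa [hρ0] using isLittleO_comp_norm_of_tendsto_div (E := E) hρ0 hρlim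

theorem hasFDerivAt_comp_norm [InnerProductSpace ℝ E] (hρ0 : ρ 0 = 0)
    (hderiv : ∀ t > (0 : ℝ), HasDerivAt ρ (ψ t) t)
    (hρlim : Tendsto (fun t => ρ t / t) (𝓝[>] 0) (𝓝 0)) (hφdef : ∀ t > (0 : ℝ), φ t = ψ t / t)
    (v : E) : HasFDerivAt (fun w : E => ρ ‖w‖) (φ ‖v‖ • innerSL ℝ v) v := by
  rcases eq_or_ne v 0 with rfl | hv
  · simpa using hasFDerivAt_comp_norm_zero hρ0 hρlim
  · have hnv : 0 < ‖v‖ := norm_pos_iff.mpr hv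
    refine ((hderiv _ hnv).hasFDerivAt.comp v (hasFDerivAt_norm_of_ne_zero hv)).congr_fderiv ?_
    ext w
    simp [hφdef _ hnv]
    ring

end RadialFunction

theorem gateaux_derivative_of_robust_loss_general
    {H : Type*} [NormedAddCommGroup H] [InnerProductSpace ℝ H]
    (x g h : H) (ρ ψ φ : ℝ → ℝ)
    (hρ0 : ρ 0 = 0)
    (hderiv : ∀ t > (0 : ℝ), HasDerivAt ρ (ψ t) t)
    (hρlim : Filter.Tendsto (fun t => ρ t / t) (nhdsWithin 0 (Set.Ioi 0)) (nhds 0))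
    (hφdef : ∀ t > (0 : ℝ), φ t = ψ t / t) :
    ∀ α : ℝ, HasDerivAt (fun a : ℝ => ρ ‖x - (g + a • h)‖)
      (-(φ ‖x - (g + α • h)‖ * (inner ℝ (x - (g + α • h)) h : ℝ))) α := by
  intro α
  have hline : HasDerivAt (fun a : ℝ => x - (g + a • h)) (-h) α := by
    simpa using (hasDerivAt_const α g).add ((hasDerivAt_id α).smul_const h) |>.const_sub x
  refine ((hasFDerivAt_comp_norm hρ0 hderiv hρlim hφdef _).comp_hasDerivAt α hline).congr_deriv ?_
  simp only [FunLike.coe_smul, Pi.smul_apply, innerSL_apply_apply, inner_neg_right,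
    smul_eq_mul, mul_neg]

theorem gateaux_derivative_of_robust_loss
    {H : Type*} [NormedAddCommGroup H] [InnerProductSpace ℝ H] [CompleteSpace H]
    (x g h : H) (ρ ψ φ : ℝ → ℝ)
    (hρ0 : ρ 0 = 0)
    (hderiv : ∀ t > (0 : ℝ), HasDerivAt ρ (ψ t) t)
    (hρlim : Filter.Tendsto (fun t => ρ t / t) (nhdsWithin 0 (Set.Ioi 0)) (nhds 0))
    (hφdef : ∀ t > (0 : ℝ), φ t = ψ t / t)
    (hφ0 : Filter.Tendsto (fun t => ψ t / t) (nhdsWithin 0 (Set.Ioi 0)) (nhds (φ 0))) :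
    ∀ α : ℝ, HasDerivAt (fun a : ℝ => ρ ‖x - (g + a • h)‖)
      (-(φ ‖x - (g + α • h)‖ * (inner ℝ (x - (g + α • h)) h : ℝ))) α :=
  gateaux_derivative_of_robust_loss_general x g h ρ ψ φ hρ0 hderiv hρlim hφdef
end
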